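/- arXiv:2508.15133 — 2 statements merged into one kernel-verified Lean document; each statement's English description precedes it below -/
import Mathlib

section
/- Let T be the reference triangle and let Q be a quadrature rule on T that is exact for degree ≤ d. If H is a homogeneous real polynomial in two variables of degree d+1, and A : ℝ² → ℝ² is the affine map A(x) = s·x + c for some s ∈ ℝ and c ∈ ℝ², then E_Q(H ∘ A) = s^{d+1} · E_Q(H). -/
/-! Homogeneity gives `H (s • q) = s ^ (d + 1) * H q`, and translating the argument by `c` only
adds terms of lower degree, because each factor `s * Xᵢ + cᵢ` of a monomial differs from `s * Xᵢ`
by a constant. So `H ∘ A = s ^ (d + 1) • H + R` with `deg R ≤ d`, and `E_Q` is linear and vanishes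
on `R` by exactness. -/

open MeasureTheory

/-- The reference triangle: convex hull of (0,0), (1,0), (0,1). -/
noncomputable def refTriangle : Set (ℝ × ℝ) :=
  convexHull ℝ ({(0, 0), (1, 0), (0, 1)} : Set (ℝ × ℝ))

/-- Evaluation of a bivariate polynomial at a point of ℝ². -/
noncomputable def evalP (p : MvPolynomial (Fin 2) ℝ) (q : ℝ × ℝ) : ℝ :=
  MvPolynomial.eval ![q.1, q.2] p

/-- Action of the quadrature rule with nodes `x` and weights `w`: Q(f) = ∑ wᵢ f(xᵢ). -/
noncomputable def quadApply {n : ℕ} (x : Fin n → ℝ × ℝ) (w : Fin n → ℝ)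
    (f : ℝ × ℝ → ℝ) : ℝ :=
  ∑ i, w i * f (x i)

/-- Error functional of the quadrature rule: E_Q(f) = ∫_T f - Q(f). -/
noncomputable def errQ {n : ℕ} (x : Fin n → ℝ × ℝ) (w : Fin n → ℝ)
    (f : ℝ × ℝ → ℝ) : ℝ :=
  (∫ q in refTriangle, f q) - quadApply x w f

/-- Exactness of the quadrature rule for all polynomials of total degree ≤ d. -/
def ExactDeg {n : ℕ} (x : Fin n → ℝ × ℝ) (w : Fin n → ℝ) (d : ℕ) : Prop :=
  ∀ p : MvPolynomial (Fin 2) ℝ, p.totalDegree ≤ d →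
    (∫ q in refTriangle, evalP p q) = quadApply x w (evalP p)

namespace MvPolynomial

variable {σ τ R : Type*}

theorem IsHomogeneous.eval_smul [CommSemiring R] {φ : MvPolynomial σ R} {m : ℕ}
    (hφ : φ.IsHomogeneous m) (s : R) (v : σ → R) :
    eval (s • v) φ = s ^ m * eval v φ := by
  simp only [eval_eq, Finset.mul_sum]
  refine Finset.sum_congr rfl fun k hk => ?_
  simp only [Pi.smul_apply, smul_eq_mul, mul_pow, Finset.prod_mul_distrib,
    Finset.prod_pow_eq_pow_sum, ← hφ.degree_eq_sum_deg_support hk]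
  ring

theorem bind₁_monomial_eq_C_mul_prod_map_toMultiset [CommSemiring R]
    (f : σ → MvPolynomial τ R) (k : σ →₀ ℕ) (a : R) :
    bind₁ f (monomial k a) = C a * (k.toMultiset.map f).prod := by
  rw [bind₁_monomial, Finsupp.toMultiset_map, Finsupp.prod_toMultiset,
    Finsupp.prod_mapDomain_index (fun _ => pow_zero _) (fun _ _ _ => pow_add _ _ _)]
  rfl

theorem eval_bind₁ [CommSemiring R] (v : τ → R) (f : σ → MvPolynomial τ R)
    (φ : MvPolynomial σ R) : eval v (bind₁ f φ) = eval (fun i => eval v (f i)) φ :=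
  eval₂Hom_bind₁ _ _ _ _

variable [CommRing R] (g : σ → MvPolynomial τ R) (c : σ → R)

theorem totalDegree_prod_map_add_C_sub_le (hg : ∀ i, (g i).totalDegree ≤ 1)
    (S : Multiset σ) :
    ((S.map fun i => g i + C (c i)).prod - (S.map g).prod).totalDegree
      ≤ Multiset.card S - 1 := by
  induction S using Multiset.induction_on with
  | empty => simp
  | cons i S ih =>
    set F := (S.map fun i => g i + C (c i)).prod
    set G := (S.map g).prod
    have hF : F.totalDegree ≤ Multiset.card S := by
      refine (totalDegree_multiset_prod _).trans ?_
      rw [Multiset.map_map]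
      refine (Multiset.sum_map_le_sum_map _ (fun _ => 1) fun j _ => ?_).trans (by simp)
      exact (totalDegree_add _ _).trans (by simpa using hg j)
    have hgG : (g i * (F - G)).totalDegree ≤ Multiset.card S := by
      rcases S.empty_or_exists_mem with rfl | ⟨j, hj⟩
      · simp [F, G]
      · have := Multiset.card_pos_iff_exists_mem.mpr ⟨j, hj⟩
        exact (totalDegree_mul _ _).trans (by have := hg i; omega)
    have key : (g i + C (c i)) * F - g i * G = C (c i) * F + g i * (F - G) := by ring
    rw [Multiset.map_cons, Multiset.map_cons, Multiset.prod_cons, Multiset.prod_cons, key,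
      Multiset.card_cons, Nat.add_sub_cancel]
    refine (totalDegree_add _ _).trans (max_le ?_ ?_)
    · exact (totalDegree_mul _ _).trans (by simpa using hF)
    · simpa using hgG

theorem totalDegree_bind₁_add_C_sub_le (hg : ∀ i, (g i).totalDegree ≤ 1)
    (p : MvPolynomial σ R) :
    (bind₁ (fun i => g i + C (c i)) p - bind₁ g p).totalDegree ≤ p.totalDegree - 1 := by
  conv_lhs => rw [p.as_sum, map_sum, map_sum, ← Finset.sum_sub_distrib]
  refine (totalDegree_finsetSum _ _).trans (Finset.sup_le fun k hk => ?_)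
  simp only [bind₁_monomial_eq_C_mul_prod_map_toMultiset, ← mul_sub]
  refine (totalDegree_mul _ _).trans ?_
  rw [totalDegree_C, zero_add]
  refine (totalDegree_prod_map_add_C_sub_le g c hg _).trans (Nat.sub_le_sub_right ?_ 1)
  exact (Finsupp.card_toMultiset k).trans_le (le_totalDegree hk)

end MvPolynomial

open MvPolynomial

theorem continuous_evalP (p : MvPolynomial (Fin 2) ℝ) : Continuous (evalP p) :=
  (continuous_eval p).comp (by fun_prop)

theorem integrableOn_refTriangle_evalP (p : MvPolynomial (Fin 2) ℝ) :
    IntegrableOn (evalP p) refTriangle :=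
  (continuous_evalP p).continuousOn.integrableOn_compact
    ((Set.toFinite _).isCompact_convexHull ℝ)

theorem errQ_const_mul_add {n : ℕ} (x : Fin n → ℝ × ℝ) (w : Fin n → ℝ) {f g : ℝ × ℝ → ℝ}
    (hf : IntegrableOn f refTriangle) (hg : IntegrableOn g refTriangle) (a : ℝ) :
    errQ x w (fun q => a * f q + g q) = a * errQ x w f + errQ x w g := by
  simp only [errQ, quadApply, integral_add (hf.const_mul a) hg, integral_const_mul,
    mul_add, Finset.sum_add_distrib, mul_left_comm _ a, ← Finset.mul_sum]
  ring

theorem ExactDeg.errQ_evalP_eq_zero {n d : ℕ} {x : Fin n → ℝ × ℝ} {w : Fin n → ℝ}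
    (hexact : ExactDeg x w d) {p : MvPolynomial (Fin 2) ℝ} (hp : p.totalDegree ≤ d) :
    errQ x w (evalP p) = 0 :=
  sub_eq_zero.mpr (hexact p hp)

theorem MvPolynomial.IsHomogeneous.exists_evalP_smul_add_eq {H : MvPolynomial (Fin 2) ℝ}
    {m : ℕ} (hH : H.IsHomogeneous m) (s : ℝ) (c : ℝ × ℝ) :
    ∃ R : MvPolynomial (Fin 2) ℝ, R.totalDegree ≤ m - 1 ∧
      ∀ q, evalP H (s • q + c) = s ^ m * evalP H q + evalP R q := by
  set g : Fin 2 → MvPolynomial (Fin 2) ℝ := fun i => C s * X i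
  set c' : Fin 2 → ℝ := ![c.1, c.2]
  have hg : ∀ i, (g i).totalDegree ≤ 1 := fun i => (isHomogeneous_C_mul_X s i).totalDegree_le
  refine ⟨bind₁ (fun i => g i + C (c' i)) H - bind₁ g H,
    (totalDegree_bind₁_add_C_sub_le g c' hg H).trans (Nat.sub_le_sub_right hH.totalDegree_le 1),
    fun q => ?_⟩
  have h_affine :
      (fun i => eval ![q.1, q.2] (g i + C (c' i))) = ![(s • q + c).1, (s • q + c).2] := by
    ext i; fin_cases i <;> simp [g, c']
  have h_linear : (fun i => eval ![q.1, q.2] (g i)) = s • ![q.1, q.2] := by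
    ext i; fin_cases i <;> simp [g]
  simp only [evalP, map_sub, eval_bind₁, h_affine, h_linear, hH.eval_smul]
  ring

theorem errQ_homogeneous_comp_affine_general {n d : ℕ}
    (x : Fin n → ℝ × ℝ) (w : Fin n → ℝ)
    (hexact : ExactDeg x w d)
    (H : MvPolynomial (Fin 2) ℝ) (hH : H.IsHomogeneous (d + 1))
    (s : ℝ) (c : ℝ × ℝ) :
    errQ x w (fun q => evalP H (s • q + c)) =
      s ^ (d + 1) * errQ x w (evalP H) := by
  obtain ⟨R, hR, hHR⟩ := hH.exists_evalP_smul_add_eq s c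
  rw [funext hHR, errQ_const_mul_add x w (integrableOn_refTriangle_evalP H)
    (integrableOn_refTriangle_evalP R), hexact.errQ_evalP_eq_zero hR, add_zero]

/-- If Q is exact for degree ≤ d, H is homogeneous of degree d+1, and
A(x) = s•x + c is affine, then E_Q(H ∘ A) = s^{d+1} · E_Q(H). -/
theorem errQ_homogeneous_comp_affine {n d : ℕ}
    (x : Fin n → ℝ × ℝ) (w : Fin n → ℝ)
    (hx : ∀ i, x i ∈ refTriangle) (hexact : ExactDeg x w d)
    (H : MvPolynomial (Fin 2) ℝ) (hH : H.IsHomogeneous (d + 1))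
    (s : ℝ) (c : ℝ × ℝ) :
    errQ x w (fun q => evalP H (s • q + c)) =
      s ^ (d + 1) * errQ x w (evalP H) :=
  errQ_homogeneous_comp_affine_general x w hexact H hH s c
end

section
/- Let Q be a quadrature rule on the reference triangle T that is exact for degree ≤ d. Then there exists a constant C ≥ 0, depending only on Q and d, such that for every h > 0, every x_0 ∈ ℝ², and every f : ℝ² → ℝ of class C^{d+1} on an open set containing the scaled triangle x_0 + h·T, one has |∫_{x_0 + h·T} f dA − h² Σ_{i=1}^n w_i f(x_0 + h·x_i)| ≤ C · h^{d+3} · M, where M is the supremum over x_0 + h·T of the operator norm of the (d+1)-st derivative of f. -/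
/-! Pulling back along `v ↦ x₀ + h • v` turns the error on `x₀ + h • T` into `h²` times the error
`E_Q(g)` of the rule on `T` for `g v = f (x₀ + h • v)`, and by the chain rule the `(d+1)`-st
derivative of `g` is bounded by `h^(d+1) M` on `T`. Exactness gives `E_Q(g) = E_Q(g - P)` for the
degree-`d` Taylor polynomial `P` of `g` at the vertex `0`, and Taylor's theorem along the segments
`[0, q] ⊆ T` (where `‖q‖ ≤ 1`) gives `|g - P| ≤ h^(d+1) M / d!` on `T`. Hence
`|E_Q(g)| ≤ (|T| + ∑ |wᵢ|) h^(d+1) M / d!`. -/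

open MeasureTheory

open scoped Nat Pointwise
open Set

theorem IsCompact.le_biSup {X : Type*} [TopologicalSpace X] {K : Set X} (hK : IsCompact K)
    {F : X → ℝ} (hF : ContinuousOn F K) {q : X} (hq : q ∈ K) : F q ≤ ⨆ p ∈ K, F p := by
  refine le_ciSup₂ (f := fun p (_ : p ∈ K) => F p) ((hK.bddAbove_image hF).mono ?_) q hq
  rintro _ ⟨_, ⟨p, rfl⟩, ⟨hp, rfl⟩⟩
  exact mem_image_of_mem F hp

section Calculus

variable {G E F : Type*} [NormedAddCommGroup G] [NormedSpace ℝ G]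
  [NormedAddCommGroup E] [NormedSpace ℝ E] [NormedAddCommGroup F] [NormedSpace ℝ F]

theorem iteratedFDerivWithin_comp_affine {f : E → F} {U : Set E} (hU : IsOpen U) {n : ℕ}
    (hf : ContDiffOn ℝ n f U) (x₀ : E) (L : G →L[ℝ] E) {v : G} (hv : x₀ + L v ∈ U) :
    iteratedFDerivWithin ℝ n (fun v => f (x₀ + L v)) ((fun v => x₀ + L v) ⁻¹' U) v =
      (iteratedFDerivWithin ℝ n f U (x₀ + L v)).compContinuousLinearMap fun _ => L := by
  have hτ : IsOpen ((x₀ + ·) ⁻¹' U) := hU.preimage (continuous_const_add x₀)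
  have hfτ : ContDiffOn ℝ n (fun z => f (x₀ + z)) ((x₀ + ·) ⁻¹' U) :=
    hf.comp (contDiff_const.add contDiff_id).contDiffOn fun _ hz => hz
  have := L.iteratedFDerivWithin_comp_right hfτ hτ.uniqueDiffOn
    (hτ.preimage L.continuous).uniqueDiffOn hv le_rfl
  rw [Function.comp_def, preimage_preimage] at this
  have hvadd : x₀ +ᵥ (x₀ + ·) ⁻¹' U = U := by
    rw [← image_vadd]; exact image_preimage_eq U (add_left_surjective x₀)
  rw [this, iteratedFDerivWithin_comp_add_left, hvadd]

theorem norm_iteratedFDerivWithin_comp_homothety_le {f : E → F} {U : Set E} (hU : IsOpen U)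
    {n : ℕ} (hf : ContDiffOn ℝ n f U) (x₀ : E) (h : ℝ) {v : E} (hv : x₀ + h • v ∈ U) :
    ‖iteratedFDerivWithin ℝ n (fun v => f (x₀ + h • v)) ((fun v => x₀ + h • v) ⁻¹' U) v‖ ≤
      ‖iteratedFDerivWithin ℝ n f U (x₀ + h • v)‖ * |h| ^ n := by
  have := iteratedFDerivWithin_comp_affine hU hf x₀ (h • ContinuousLinearMap.id ℝ E) hv
  simp only [FunLike.coe_smul, Pi.smul_apply, ContinuousLinearMap.id_apply] at this
  rw [this]
  refine (ContinuousMultilinearMap.norm_compContinuousLinearMap_le _ _).trans ?_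
  simp only [Finset.prod_const, Finset.card_univ, Fintype.card_fin, norm_smul, Real.norm_eq_abs]
  gcongr
  exact mul_le_of_le_one_right (abs_nonneg h) ContinuousLinearMap.norm_id_le

theorem iteratedDerivWithin_comp_segment {g : E → F} {s : Set E} (hs : IsOpen s) {n : ℕ}
    (hg : ContDiffOn ℝ n g s) {x y : E} (hseg : ∀ t ∈ Icc (0 : ℝ) 1, x + t • y ∈ s) {t : ℝ}
    (ht : t ∈ Icc (0 : ℝ) 1) :
    iteratedDerivWithin n (fun t => g (x + t • y)) (Icc 0 1) t =
      iteratedFDerivWithin ℝ n g s (x + t • y) fun _ => y := by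
  set L := ContinuousLinearMap.toSpanSingleton ℝ y
  have hL : ∀ t, L t = t • y := ContinuousLinearMap.toSpanSingleton_apply ℝ y
  have hS : IsOpen ((fun t => x + L t) ⁻¹' s) := hs.preimage (by fun_prop)
  have hIcc : Icc (0 : ℝ) 1 ⊆ (fun t => x + L t) ⁻¹' s := fun t ht => by simpa [hL] using hseg t ht
  have hgL : ContDiffOn ℝ n (fun t => g (x + L t)) ((fun t => x + L t) ⁻¹' s) :=
    hg.comp (contDiff_const.add L.contDiff).contDiffOn fun _ ht => ht
  simp_rw [← hL]
  rw [iteratedDerivWithin_eq_iteratedFDerivWithin,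
    iteratedFDerivWithin_subset hIcc (uniqueDiffOn_Icc zero_lt_one) hS.uniqueDiffOn hgL ht,
    iteratedFDerivWithin_comp_affine hs hg x L (hIcc ht)]
  simp [hL]

noncomputable def taylorSum (g : E → F) (s : Set E) (n : ℕ) (x y : E) : F :=
  ∑ k ∈ Finset.range (n + 1), (k ! : ℝ)⁻¹ • iteratedFDerivWithin ℝ k g s x fun _ => y

theorem norm_sub_taylorSum_le {g : E → F} {s : Set E} (hs : IsOpen s) {n : ℕ}
    (hg : ContDiffOn ℝ (n + 1) g s) {x y : E} (hseg : ∀ t ∈ Icc (0 : ℝ) 1, x + t • y ∈ s)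
    {C : ℝ} (hC : ∀ t ∈ Icc (0 : ℝ) 1, ‖iteratedFDerivWithin ℝ (n + 1) g s (x + t • y)‖ ≤ C) :
    ‖g (x + y) - taylorSum g s n x y‖ ≤ C * ‖y‖ ^ (n + 1) / n ! := by
  have hφ : ContDiffOn ℝ (n + 1) (fun t : ℝ => g (x + t • y)) (Icc 0 1) :=
    hg.comp (by fun_prop : ContDiff ℝ (n + 1) fun t : ℝ => x + t • y).contDiffOn
      fun t ht => hseg t ht
  have hderiv : ∀ k ≤ n + 1, ∀ t ∈ Icc (0 : ℝ) 1,
      iteratedDerivWithin k (fun t => g (x + t • y)) (Icc 0 1) t =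
        iteratedFDerivWithin ℝ k g s (x + t • y) fun _ => y := fun k hk t ht =>
    iteratedDerivWithin_comp_segment hs (hg.of_le (by exact_mod_cast hk)) hseg ht
  have hbound : ∀ t ∈ Icc (0 : ℝ) 1,
      ‖iteratedDerivWithin (n + 1) (fun t => g (x + t • y)) (Icc 0 1) t‖ ≤ C * ‖y‖ ^ (n + 1) := by
    intro t ht
    rw [hderiv (n + 1) le_rfl t ht]
    refine ((iteratedFDerivWithin ℝ (n + 1) g s (x + t • y)).le_opNorm _).trans ?_
    simp only [Finset.prod_const, Finset.card_univ, Fintype.card_fin]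
    gcongr
    exact hC t ht
  have htaylor :
      taylorWithinEval (fun t => g (x + t • y)) n (Icc 0 1) 0 1 = taylorSum g s n x y := by
    rw [taylor_within_apply, taylorSum]
    refine Finset.sum_congr rfl fun k hk => ?_
    rw [hderiv k (by have := Finset.mem_range.1 hk; omega) 0 (left_mem_Icc.2 zero_le_one)]
    simp
  simpa [htaylor] using
    taylor_mean_remainder_bound zero_le_one hφ (right_mem_Icc.2 zero_le_one) hbound

end Calculus

section ChangeOfVariables

variable {E F : Type*} [NormedAddCommGroup E] [NormedSpace ℝ E] [FiniteDimensional ℝ E]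
  [MeasurableSpace E] [BorelSpace E] [NormedAddCommGroup F] [NormedSpace ℝ F]

theorem setIntegral_image_homothety (μ : Measure E) [μ.IsAddHaarMeasure] {s : Set E}
    (hs : MeasurableSet s) (x₀ : E) {h : ℝ} (hh : h ≠ 0) (f : E → F) :
    ∫ y in (fun v => x₀ + h • v) '' s, f y ∂μ =
      |h| ^ Module.finrank ℝ E • ∫ v in s, f (x₀ + h • v) ∂μ := by
  have hderiv : ∀ v ∈ s, HasFDerivWithinAt (fun v => x₀ + h • v)
      (h • ContinuousLinearMap.id ℝ E) s v := fun v _ =>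
    (((hasFDerivAt_id v).const_smul h).const_add x₀).hasFDerivWithinAt
  have hinj : InjOn (fun v => x₀ + h • v) s := fun a _ b _ hab =>
    smul_right_injective E hh (add_left_cancel hab)
  rw [integral_image_eq_integral_abs_det_fderiv_smul μ hs hderiv hinj, ← integral_smul]
  simp [ContinuousLinearMap.det, LinearMap.det_smul, abs_pow]

end ChangeOfVariables

section Polynomial

open MvPolynomial

theorem MvPolynomial.totalDegree_sum_C_mul_le {ι σ R : Type*} [CommSemiring R] (t : Finset ι)
    (c : ι → R) (p : ι → MvPolynomial σ R) {n : ℕ} (hp : ∀ i ∈ t, (p i).totalDegree ≤ n) :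
    (∑ i ∈ t, C (c i) * p i).totalDegree ≤ n := by
  refine (totalDegree_finsetSum _ _).trans (Finset.sup_le fun i hi => ?_)
  refine (totalDegree_mul _ _).trans ?_
  rw [totalDegree_C, zero_add]
  exact hp i hi

theorem exists_totalDegree_le_evalP_eq_diag {k : ℕ}
    (m : ContinuousMultilinearMap ℝ (fun _ : Fin k => ℝ × ℝ) ℝ) :
    ∃ p : MvPolynomial (Fin 2) ℝ, p.totalDegree ≤ k ∧ ∀ q, evalP p q = m fun _ => q := by
  let e : Fin 2 → ℝ × ℝ := ![(1, 0), (0, 1)]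
  refine ⟨∑ r : Fin k → Fin 2, C (m fun i => e (r i)) * ∏ i, X (r i),
    totalDegree_sum_C_mul_le _ _ _ fun r _ => ?_, fun q => ?_⟩
  · refine (totalDegree_finsetProd _ _).trans ?_
    simp [totalDegree_X]
  · have hq : (fun _ : Fin k => q) = fun _ => ∑ j, ![q.1, q.2] j • e j := by
      simp [e, Fin.sum_univ_two]
    have hexpand : (m fun _ => q) =
        ∑ r : Fin k → Fin 2, (∏ i, ![q.1, q.2] (r i)) • m fun i => e (r i) := by
      rw [hq, m.map_sum]
      exact Finset.sum_congr rfl fun r _ => m.map_smul_univ _ _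
    simp [hexpand, evalP, mul_comm]

theorem exists_totalDegree_le_evalP_eq_taylorSum (g : ℝ × ℝ → ℝ) (s : Set (ℝ × ℝ)) (n : ℕ)
    (x : ℝ × ℝ) :
    ∃ p : MvPolynomial (Fin 2) ℝ, p.totalDegree ≤ n ∧ ∀ y, evalP p y = taylorSum g s n x y := by
  choose p hdeg heval using
    fun k => exists_totalDegree_le_evalP_eq_diag (iteratedFDerivWithin ℝ k g s x)
  refine ⟨∑ k ∈ Finset.range (n + 1), C (k ! : ℝ)⁻¹ * p k,
    totalDegree_sum_C_mul_le _ _ _ fun k hk => ?_, fun y => ?_⟩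
  · exact (hdeg k).trans (Nat.lt_succ_iff.1 (Finset.mem_range.1 hk))
  · simp only [taylorSum, ← heval, evalP, map_sum, map_mul, eval_C, smul_eq_mul]

end Polynomial

section Quadrature

theorem isCompact_refTriangle : IsCompact refTriangle :=
  (Set.toFinite _).isCompact_convexHull ℝ

theorem convex_refTriangle : Convex ℝ refTriangle :=
  convex_convexHull ℝ _

theorem zero_mem_refTriangle : (0 : ℝ × ℝ) ∈ refTriangle :=
  subset_convexHull ℝ _ (Or.inl rfl)

theorem refTriangle_subset_closedBall : refTriangle ⊆ Metric.closedBall 0 1 := by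
  refine convexHull_min ?_ (convex_closedBall _ _)
  rintro p (rfl | rfl | rfl) <;> simp [Prod.norm_def]

theorem abs_sub_taylorSum_le_of_mem_refTriangle {g : ℝ × ℝ → ℝ} {s : Set (ℝ × ℝ)} (hs : IsOpen s)
    (hTs : refTriangle ⊆ s) {n : ℕ} (hg : ContDiffOn ℝ (n + 1) g s) {B : ℝ}
    (hB : ∀ v ∈ refTriangle, ‖iteratedFDerivWithin ℝ (n + 1) g s v‖ ≤ B) {q : ℝ × ℝ}
    (hq : q ∈ refTriangle) : |g q - taylorSum g s n 0 q| ≤ B / n ! := by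
  have hseg : ∀ t ∈ Icc (0 : ℝ) 1, 0 + t • q ∈ refTriangle := fun t ht => by
    simpa using convex_refTriangle.smul_mem_of_zero_mem zero_mem_refTriangle hq ht
  have hB0 : 0 ≤ B := (norm_nonneg _).trans (hB q hq)
  have hq1 : ‖q‖ ^ (n + 1) ≤ 1 :=
    pow_le_one₀ (norm_nonneg q) (mem_closedBall_zero_iff.1 (refTriangle_subset_closedBall hq))
  have := norm_sub_taylorSum_le hs hg (fun t ht => hTs (hseg t ht)) fun t ht => hB _ (hseg t ht)
  rw [zero_add, Real.norm_eq_abs] at this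
  exact this.trans (div_le_div_of_nonneg_right (mul_le_of_le_one_right hB0 hq1) (Nat.cast_nonneg _))

variable {n : ℕ} {x : Fin n → ℝ × ℝ} {w : Fin n → ℝ}

theorem errQ_sub {f g : ℝ × ℝ → ℝ} (hf : IntegrableOn f refTriangle)
    (hg : IntegrableOn g refTriangle) : errQ x w (f - g) = errQ x w f - errQ x w g := by
  simp only [errQ, quadApply, Pi.sub_apply, integral_sub hf hg, mul_sub, Finset.sum_sub_distrib]
  ring

theorem abs_errQ_le (hx : ∀ i, x i ∈ refTriangle) {f : ℝ × ℝ → ℝ} {B : ℝ}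
    (hf : ∀ q ∈ refTriangle, |f q| ≤ B) :
    |errQ x w f| ≤ (volume.real refTriangle + ∑ i, |w i|) * B := by
  have hint : |∫ q in refTriangle, f q| ≤ B * volume.real refTriangle :=
    norm_setIntegral_le_of_norm_le_const (μ := volume) (f := f)
      isCompact_refTriangle.measure_lt_top hf
  have hsum : |quadApply x w f| ≤ (∑ i, |w i|) * B := by
    refine (Finset.abs_sum_le_sum_abs _ _).trans ?_
    rw [Finset.sum_mul]
    refine Finset.sum_le_sum fun i _ => ?_
    rw [abs_mul]
    exact mul_le_mul_of_nonneg_left (hf _ (hx i)) (abs_nonneg _)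
  calc |errQ x w f| ≤ |∫ q in refTriangle, f q| + |quadApply x w f| := abs_sub _ _
    _ ≤ (volume.real refTriangle + ∑ i, |w i|) * B := by linarith

theorem abs_errQ_le_of_exactDeg (hx : ∀ i, x i ∈ refTriangle) {d : ℕ} (hexact : ExactDeg x w d)
    {f : ℝ × ℝ → ℝ} (hf : ContinuousOn f refTriangle) {p : MvPolynomial (Fin 2) ℝ}
    (hp : p.totalDegree ≤ d) {B : ℝ} (hB : ∀ q ∈ refTriangle, |f q - evalP p q| ≤ B) :
    |errQ x w f| ≤ (volume.real refTriangle + ∑ i, |w i|) * B := by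
  have hpcont : Continuous (evalP p) :=
    (MvPolynomial.continuous_eval p).comp (by fun_prop)
  have hp0 : errQ x w (evalP p) = 0 := sub_eq_zero.2 (hexact p hp)
  have := errQ_sub (x := x) (w := w) (hf.integrableOn_compact isCompact_refTriangle)
    (hpcont.continuousOn.integrableOn_compact isCompact_refTriangle)
  rw [hp0, sub_zero] at this
  exact this ▸ abs_errQ_le hx hB

end Quadrature

/-- scaled single-element error bound. There is C ≥ 0 depending only on the
rule and d such that for every h > 0, x₀ and f of class C^{d+1} on an open set containing
x₀ + h·T, the quadrature error on x₀ + h·T is at most C · h^{d+3} · M, where M is the sup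
over x₀ + h·T of the operator norm of the (d+1)-st derivative of f. -/
theorem scaled_triangle_error_bound {n d : ℕ}
    (x : Fin n → ℝ × ℝ) (w : Fin n → ℝ)
    (hx : ∀ i, x i ∈ refTriangle) (hexact : ExactDeg x w d) :
    ∃ C : ℝ, 0 ≤ C ∧
      ∀ (h : ℝ), 0 < h → ∀ (x₀ : ℝ × ℝ) (f : ℝ × ℝ → ℝ) (U : Set (ℝ × ℝ)),
        IsOpen U → (fun v => x₀ + h • v) '' refTriangle ⊆ U →
        ContDiffOn ℝ (d + 1) f U →
        |(∫ q in (fun v => x₀ + h • v) '' refTriangle, f q) -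
            h ^ 2 * ∑ i, w i * f (x₀ + h • x i)| ≤
          C * h ^ (d + 3) *
            ⨆ q ∈ (fun v => x₀ + h • v) '' refTriangle,
              ‖iteratedFDerivWithin ℝ (d + 1) f U q‖ := by
  refine ⟨(volume.real refTriangle + ∑ i, |w i|) / d !, by positivity, ?_⟩
  intro h hh x₀ f U hU hsub hf
  set M := ⨆ q ∈ (fun v => x₀ + h • v) '' refTriangle, ‖iteratedFDerivWithin ℝ (d + 1) f U q‖
  set g := fun v => f (x₀ + h • v)
  set s := (fun v => x₀ + h • v) ⁻¹' U
  have hTs : refTriangle ⊆ s := fun v hv => hsub ⟨v, hv, rfl⟩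
  have hg : ContDiffOn ℝ (d + 1) g s :=
    hf.comp (by fun_prop : ContDiff ℝ (d + 1) fun v : ℝ × ℝ => x₀ + h • v).contDiffOn
      fun _ hv => hv
  have hDg : ∀ v ∈ refTriangle, ‖iteratedFDerivWithin ℝ (d + 1) g s v‖ ≤ M * h ^ (d + 1) := by
    intro v hv
    have hM : ‖iteratedFDerivWithin ℝ (d + 1) f U (x₀ + h • v)‖ ≤ M :=
      (isCompact_refTriangle.image (by fun_prop)).le_biSup
        ((hf.continuousOn_iteratedFDerivWithin le_rfl hU.uniqueDiffOn).norm.mono hsub)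
        ⟨v, hv, rfl⟩
    refine (norm_iteratedFDerivWithin_comp_homothety_le hU hf x₀ h (hsub ⟨v, hv, rfl⟩)).trans ?_
    rw [abs_of_pos hh]
    gcongr
  obtain ⟨p, hp, hpeval⟩ := exists_totalDegree_le_evalP_eq_taylorSum g s d 0
  have herr := abs_errQ_le_of_exactDeg hx hexact (hg.continuousOn.mono hTs) hp fun q hq =>
    hpeval q ▸ abs_sub_taylorSum_le_of_mem_refTriangle (hU.preimage (by fun_prop)) hTs hg hDg hq
  rw [setIntegral_image_homothety volume isCompact_refTriangle.measurableSet x₀ hh.ne',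
    Module.finrank_prod, Module.finrank_self, abs_of_pos hh, smul_eq_mul, ← mul_sub, abs_mul,
    abs_of_pos (by positivity : 0 < h ^ 2)]
  calc h ^ 2 * |errQ x w g|
      ≤ h ^ 2 * ((volume.real refTriangle + ∑ i, |w i|) * (M * h ^ (d + 1) / d !)) := by gcongr
    _ = _ := by ring
end
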